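/- Assume α < β < ω₂, α is a limit ordinal, ν < ω₁, and the set {ξ < α : ρ(ξ, β) ≤ ν} is cofinal in α. Then ρ(α, β) ≤ ν. -/

import Mathlib

open Ordinal Set

universe u

noncomputable section

/-- `ω₁`, the first uncountable cardinal, viewed as an ordinal. -/
def omega1 : Ordinal.{u} := (Cardinal.aleph 1).ord

/-- `ω₂`, the second uncountable cardinal, viewed as an ordinal. -/
def omega2 : Ordinal.{u} := (Cardinal.aleph 2).ord

/-- `δ` is a limit point of the set of ordinals `s`: `δ > 0` and `sup (s ∩ δ) = δ`. -/
def IsLimPt (s : Set Ordinal.{u}) (δ : Ordinal.{u}) : Prop :=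
  0 < δ ∧ sSup (s ∩ Set.Iio δ) = δ

/-- `s` is a closed unbounded subset of the (limit) ordinal `α`: it consists of
ordinals below `α`, is unbounded in `α`, and contains all of its limit points below `α`. -/
def IsClubIn (s : Set Ordinal.{u}) (α : Ordinal.{u}) : Prop :=
  s ⊆ Set.Iio α ∧ (∀ ξ < α, ∃ η ∈ s, ξ < η) ∧ ∀ δ < α, IsLimPt s δ → δ ∈ s

open Classical in
/-- The order type of a set of ordinals: the unique ordinal `o` whose lift is the
order type of the well-order induced on `s` (taken to be `0` if `s` is too large). -/
def otp (s : Set Ordinal.{u}) : Ordinal.{u} :=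
  if h : ∃ o : Ordinal.{u},
      Ordinal.lift.{u + 1, u} o = @Ordinal.type s (Subrel (· < ·) (· ∈ s)) (by infer_instance)
  then h.choose else 0

/-- `Λ(α,β)`: the largest limit point of `C β ∩ (α+1)`, taken to be `0` if none exists. -/
def Lam (C : Ordinal.{u} → Set Ordinal.{u}) (α β : Ordinal.{u}) : Ordinal.{u} :=
  sSup {δ | IsLimPt (C β ∩ Set.Iic α) δ}

/-- `C` is a square-like sequence `⟨C_α : α < ω₂⟩` as in the context:
`C_0 = ∅`, `C_{α+1} = {α}`; for limit `α < ω₂`, `C_α` is club in `α` with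
`otp(C_α) ≤ ω₁`, and `otp(C_α) < ω₁` if `cf(α) = ω`; every member of any `C_α`
has cofinality at most `ω`; and `C_α = C_β ∩ α` whenever `α` is a limit point of `C_β`. -/
structure SqSeq (C : Ordinal.{u} → Set Ordinal.{u}) : Prop where
  zero : C 0 = ∅
  succ : ∀ α : Ordinal.{u}, C (α + 1) = {α}
  club : ∀ α < omega2.{u}, Order.IsSuccLimit α → IsClubIn (C α) α
  otp_le : ∀ α < omega2.{u}, Order.IsSuccLimit α → otp (C α) ≤ omega1
  otp_lt : ∀ α < omega2.{u}, Order.IsSuccLimit α →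
    Ordinal.cof α = Cardinal.aleph0 → otp (C α) < omega1
  cof_le : ∀ α β : Ordinal.{u}, β ∈ C α → Ordinal.cof β ≤ Cardinal.aleph0
  coh : ∀ α β : Ordinal.{u}, β < omega2.{u} → IsLimPt (C β) α → C α = C β ∩ Set.Iio α

/-- `rho` is Todorcevic's ρ function associated with the sequence `C`:
`ρ(α,α) = 0`, `ρ` takes values below `ω₁`, and for `α < β < ω₂`,
`ρ(α,β) = max({otp(C_β ∩ α), ρ(α, min(C_β \ α))} ∪ {ρ(ξ,α) : ξ ∈ C_β ∩ [Λ(α,β), α)})`. -/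
structure RhoFun (C : Ordinal.{u} → Set Ordinal.{u})
    (rho : Ordinal.{u} → Ordinal.{u} → Ordinal.{u}) : Prop where
  refl : ∀ α : Ordinal.{u}, rho α α = 0
  lt_omega1 : ∀ α β : Ordinal.{u}, α ≤ β → β < omega2.{u} → rho α β < omega1
  eq : ∀ α β : Ordinal.{u}, α < β → β < omega2.{u} →
    rho α β = sSup ({otp (C β ∩ Set.Iio α), rho α (sInf (C β ∩ Set.Ici α))} ∪
      (fun ξ => rho ξ α) '' (C β ∩ Set.Ico (Lam C α β) α))

/-!
By induction on `β`. If `α` is a limit point of `C_β`, then `α ∈ C_β`, the walk from `β` to `α`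
takes a single step and `ρ(α,β) = otp(C_β ∩ α)`; since `otp(C_β ∩ ξ) ≤ ρ(ξ,β) ≤ ν` for cofinally
many `ξ < α`, this order type is at most `ν`. Otherwise `C_β` misses an interval `(η₀, α)`, so
every `ξ` in it steps to the same `β₁ = min(C_β \ α)` as `α` does, with `Λ(ξ,β) ≤ Λ(α,β)`. The
induction hypothesis at `β₁` bounds `ρ(α,β₁)`, and each remaining term `ρ(ζ,α)` is bounded through
a good `ξ > ζ` using the two triangle inequalities `ρ(α,γ) ≤ max(ρ(α,β), ρ(β,γ))` and
`ρ(α,β) ≤ max(ρ(α,γ), ρ(β,γ))` for `α ≤ β ≤ γ`. These are proved by induction on `γ`: if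
`Λ(β,γ) ≤ α`, the walks from `γ` to `α` and to `β` share their terms below `α`; otherwise coherence
gives `ρ(α,γ) = ρ(α,Λ(β,γ))` and the induction hypothesis at `β` applies.
-/

section LimitPoints

variable {s t : Set Ordinal.{u}} {a δ : Ordinal.{u}}

theorem isLimPt_iff : IsLimPt s δ ↔ 0 < δ ∧ ∀ η < δ, (s ∩ Ioo η δ).Nonempty := by
  refine and_congr_right fun _ => ⟨fun h η hη => ?_, fun h => ?_⟩
  · obtain ⟨x, hx, hηx⟩ := exists_lt_of_lt_csSup' (h.symm ▸ hη : η < sSup (s ∩ Iio δ))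
    exact ⟨x, hx.1, hηx, hx.2⟩
  · refine le_antisymm (csSup_le' fun x hx => hx.2.le) (le_of_forall_lt fun η hη => ?_)
    obtain ⟨x, hxs, hηx, hxδ⟩ := h η hη
    exact hηx.trans_le (le_csSup ⟨δ, fun y hy => hy.2.le⟩ ⟨hxs, hxδ⟩)

theorem IsLimPt.mono (hst : s ⊆ t) (h : IsLimPt s δ) : IsLimPt t δ := by
  rw [isLimPt_iff] at h ⊢
  exact ⟨h.1, fun η hη => (h.2 η hη).mono (inter_subset_inter_left _ hst)⟩

theorem IsLimPt.le_of_subset_Iic (h : IsLimPt s δ) (hs : s ⊆ Iic a) : δ ≤ a :=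
  h.2 ▸ csSup_le' fun _ hx => hs hx.1

theorem IsLimPt.inter_Iic (h : IsLimPt s δ) (hδ : δ ≤ a) : IsLimPt (s ∩ Iic a) δ := by
  rw [isLimPt_iff] at h ⊢
  refine ⟨h.1, fun η hη => ?_⟩
  obtain ⟨x, hxs, hx⟩ := h.2 η hη
  exact ⟨x, ⟨hxs, hx.2.le.trans hδ⟩, hx⟩

theorem isLimPt_csSup {D : Set Ordinal.{u}} (hD : D.Nonempty) (hbdd : BddAbove D)
    (h : ∀ d ∈ D, IsLimPt s d) : IsLimPt s (sSup D) := by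
  obtain ⟨d, hd⟩ := hD
  refine isLimPt_iff.2 ⟨(h d hd).1.trans_le (le_csSup hbdd hd), fun η hη => ?_⟩
  obtain ⟨e, he, hηe⟩ := exists_lt_of_lt_csSup ⟨d, hd⟩ hη
  obtain ⟨x, hxs, hηx, hxe⟩ := (isLimPt_iff.1 (h e he)).2 η hηe
  exact ⟨x, hxs, hηx, hxe.trans_le (le_csSup hbdd he)⟩

end LimitPoints

section OrderType

variable {s : Set Ordinal.{u}} {α ν : Ordinal.{u}}

theorem lift_otp (hs : BddAbove s) : lift.{u + 1} (otp s) = typeLT s := by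
  obtain ⟨b, hb⟩ := hs
  have hle : typeLT s ≤ lift.{u + 1} (Order.succ b) := by
    rw [← type_lt_Iio]
    exact type_mono fun x hx => Order.lt_succ_iff.2 (hb hx)
  have hex : ∃ o : Ordinal.{u},
      lift.{u + 1} o = @type s (Subrel (· < ·) (· ∈ s)) (by infer_instance) :=
    mem_range_lift_of_le hle
  rw [otp, dif_pos hex]
  exact hex.choose_spec

theorem otp_mono {t : Set Ordinal.{u}} (hst : s ⊆ t) (ht : BddAbove t) : otp s ≤ otp t := by
  rw [← lift_le.{u + 1}, lift_otp (ht.mono hst), lift_otp ht]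
  exact type_mono hst

theorem lift_otp_inter_Iio {e : Ordinal.{u}} (hs : BddAbove s) (he : e ∈ s) :
    lift.{u + 1} (otp (s ∩ Iio e)) = typein (α := s) (· < ·) ⟨e, he⟩ := by
  rw [lift_otp (hs.mono inter_subset_left), ← type_Iio_lt]
  exact OrderIso.ordinalType_congr
    { toFun := fun x => ⟨⟨x.1, x.2.1⟩, x.2.2⟩
      invFun := fun y => ⟨y.1.1, y.1.2, y.2⟩
      map_rel_iff' := Iff.rfl }

theorem inter_Iio_inter_Iio_of_le {ξ e : Ordinal.{u}} (h : e ≤ ξ) :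
    s ∩ Iio ξ ∩ Iio e = s ∩ Iio e := by
  rw [inter_assoc, Iio_inter_Iio, min_eq_right h]

theorem otp_inter_Iio_lt {ξ e : Ordinal.{u}} (he : e ∈ s) (heξ : e < ξ) :
    otp (s ∩ Iio e) < otp (s ∩ Iio ξ) := by
  have hbdd : BddAbove (s ∩ Iio ξ) := bddAbove_Iio.mono inter_subset_right
  rw [← lift_lt.{u + 1}, ← inter_Iio_inter_Iio_of_le heξ.le, lift_otp_inter_Iio hbdd ⟨he, heξ⟩,
    lift_otp hbdd]
  exact typein_lt_type _ _

theorem exists_otp_inter_Iio_eq (hν : ν < otp (s ∩ Iio α)) :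
    ∃ e ∈ s, e < α ∧ otp (s ∩ Iio e) = ν := by
  have hbdd : BddAbove (s ∩ Iio α) := bddAbove_Iio.mono inter_subset_right
  obtain ⟨⟨e, he⟩, hνe⟩ := typein_surj (α := ↥(s ∩ Iio α)) (· < ·) (o := lift.{u + 1} ν)
    (by rwa [← lift_otp hbdd, lift_lt])
  refine ⟨e, he.1, he.2, ?_⟩
  rw [← lift_inj.{u + 1}, ← inter_Iio_inter_Iio_of_le he.2.le, lift_otp_inter_Iio hbdd he, hνe]

theorem otp_inter_Iio_le_of_cofinal (h : ∀ η < α, ∃ ξ, η < ξ ∧ ξ < α ∧ otp (s ∩ Iio ξ) ≤ ν) :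
    otp (s ∩ Iio α) ≤ ν := by
  by_contra! hν
  obtain ⟨e, he, heα, rfl⟩ := exists_otp_inter_Iio_eq hν
  obtain ⟨ξ, heξ, -, hξν⟩ := h e heα
  exact (otp_inter_Iio_lt he heξ).not_ge hξν

end OrderType

section Lam

variable {C : Ordinal.{u} → Set Ordinal.{u}} {α β γ : Ordinal.{u}}

theorem setOf_isLimPt_inter_Iic_subset : {δ | IsLimPt (C β ∩ Iic α) δ} ⊆ Iic α :=
  fun _ (hδ : IsLimPt _ _) => hδ.le_of_subset_Iic inter_subset_right

theorem lam_le : Lam C α β ≤ α :=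
  csSup_le' setOf_isLimPt_inter_Iic_subset

theorem le_lam {δ : Ordinal.{u}} (h : IsLimPt (C β ∩ Iic α) δ) : δ ≤ Lam C α β :=
  le_csSup ⟨α, setOf_isLimPt_inter_Iic_subset⟩ h

theorem lam_mono (hαβ : α ≤ β) : Lam C α γ ≤ Lam C β γ :=
  csSup_le' fun _ hδ => le_lam (hδ.mono (inter_subset_inter_right _ (Iic_subset_Iic.2 hαβ)))

theorem isLimPt_lam (h : Lam C α β ≠ 0) : IsLimPt (C β) (Lam C α β) := by
  rcases eq_empty_or_nonempty {δ | IsLimPt (C β ∩ Iic α) δ} with hempty | hne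
  · exact absurd (by rw [Lam, hempty, csSup_empty]; rfl) h
  · exact (isLimPt_csSup hne ⟨α, setOf_isLimPt_inter_Iic_subset⟩ fun _ hδ => hδ).mono
      inter_subset_left

theorem lam_le_lam_of_lam_le (h : Lam C β γ ≤ α) : Lam C β γ ≤ Lam C α γ := by
  obtain h0 | h0 := eq_or_ne (Lam C β γ) 0
  · exact h0 ▸ zero_le
  · exact le_lam ((isLimPt_lam h0).inter_Iic h)

end Lam

namespace SqSeq

variable {C : Ordinal.{u} → Set Ordinal.{u}} {α β δ : Ordinal.{u}}

theorem subset_Iio (hC : SqSeq C) (hβ : β < omega2.{u}) : C β ⊆ Iio β := by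
  rcases zero_or_succ_or_isSuccLimit β with rfl | ⟨γ, rfl⟩ | hlim
  · simp [hC.zero]
  · simp [Order.succ_eq_add_one, hC.succ]
  · exact (hC.club β hβ hlim).1

theorem inter_Ici_nonempty (hC : SqSeq C) (hαβ : α < β) (hβ : β < omega2.{u}) :
    (C β ∩ Ici α).Nonempty := by
  rcases zero_or_succ_or_isSuccLimit β with rfl | ⟨γ, rfl⟩ | hlim
  · exact absurd hαβ not_lt_zero
  · rw [Order.succ_eq_add_one, hC.succ]
    exact ⟨γ, rfl, Order.lt_succ_iff.1 hαβ⟩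
  · obtain ⟨η, hη, hαη⟩ := (hC.club β hβ hlim).2.1 α hαβ
    exact ⟨η, hη, hαη.le⟩

theorem sInf_inter_Ici_mem (hC : SqSeq C) (hαβ : α < β) (hβ : β < omega2.{u}) :
    sInf (C β ∩ Ici α) ∈ C β ∩ Ici α :=
  csInf_mem (hC.inter_Ici_nonempty hαβ hβ)

theorem sInf_inter_Ici_lt (hC : SqSeq C) (hαβ : α < β) (hβ : β < omega2.{u}) :
    sInf (C β ∩ Ici α) < β :=
  hC.subset_Iio hβ (hC.sInf_inter_Ici_mem hαβ hβ).1

theorem mem_of_isLimPt (hC : SqSeq C) (hβ : β < omega2.{u}) (hδβ : δ < β)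
    (h : IsLimPt (C β) δ) : δ ∈ C β := by
  rcases zero_or_succ_or_isSuccLimit β with rfl | ⟨γ, rfl⟩ | hlim
  · exact absurd hδβ not_lt_zero
  · rw [Order.succ_eq_add_one, hC.succ] at h
    have hgaps := (isLimPt_iff.1 h).2
    obtain ⟨x, hx, -, hxδ⟩ := hgaps 0 h.1
    obtain ⟨y, hy, hxy, -⟩ := hgaps x hxδ
    exact (lt_irrefl x (hxy.trans_eq (hy.trans hx.symm))).elim
  · exact (hC.club β hβ hlim).2.2 δ hδβ h

end SqSeq

theorem inter_Ici_eq_of_inter_Ioo_eq_empty {X : Type*} [LinearOrder X] {s : Set X} {a b c : X}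
    (hgap : s ∩ Ioo a b = ∅) (hac : a < c) (hcb : c ≤ b) : s ∩ Ici c = s ∩ Ici b := by
  refine subset_antisymm (fun x ⟨hxs, hcx⟩ => ⟨hxs, not_lt.1 fun hxb => ?_⟩)
    (inter_subset_inter_right _ (Ici_subset_Ici.2 hcb))
  exact (eq_empty_iff_forall_notMem.1 hgap) x ⟨hxs, hac.trans_le hcx, hxb⟩

def TriangleAt (rho : Ordinal.{u} → Ordinal.{u} → Ordinal.{u}) (α β γ : Ordinal.{u}) : Prop :=
  rho α γ ≤ max (rho α β) (rho β γ) ∧ rho α β ≤ max (rho α γ) (rho β γ)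

namespace RhoFun

variable {C : Ordinal.{u} → Set Ordinal.{u}} {rho : Ordinal.{u} → Ordinal.{u} → Ordinal.{u}}
  {α β γ ν ξ : Ordinal.{u}}

theorem le_iff (hrho : RhoFun C rho) (hC : SqSeq C) (hαβ : α < β) (hβ : β < omega2.{u}) :
    rho α β ≤ ν ↔ otp (C β ∩ Iio α) ≤ ν ∧ rho α (sInf (C β ∩ Ici α)) ≤ ν ∧
      ∀ ξ ∈ C β ∩ Ico (Lam C α β) α, rho ξ α ≤ ν := by
  have hbdd : BddAbove ({otp (C β ∩ Iio α), rho α (sInf (C β ∩ Ici α))} ∪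
      (fun ξ => rho ξ α) '' (C β ∩ Ico (Lam C α β) α)) := by
    refine ⟨max (otp (C β ∩ Iio α)) omega1, ?_⟩
    rintro _ ((rfl | rfl) | ⟨ξ, hξ, rfl⟩)
    · exact le_max_left _ _
    · exact le_max_of_le_right (hrho.lt_omega1 _ _ (hC.sInf_inter_Ici_mem hαβ hβ).2
        ((hC.sInf_inter_Ici_lt hαβ hβ).trans hβ)).le
    · exact le_max_of_le_right (hrho.lt_omega1 _ _ hξ.2.2.le (hαβ.trans hβ)).le
  rw [hrho.eq α β hαβ hβ, csSup_le_iff hbdd ((insert_nonempty _ _).mono subset_union_left)]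
  simp only [mem_union, mem_insert_iff, mem_singleton_iff, or_imp, forall_and, forall_eq,
    forall_mem_image, and_assoc]

theorem otp_le_rho (hrho : RhoFun C rho) (hC : SqSeq C) (hαβ : α < β) (hβ : β < omega2.{u}) :
    otp (C β ∩ Iio α) ≤ rho α β :=
  ((hrho.le_iff hC hαβ hβ).1 le_rfl).1

theorem rho_sInf_le_rho (hrho : RhoFun C rho) (hC : SqSeq C) (hαβ : α < β)
    (hβ : β < omega2.{u}) : rho α (sInf (C β ∩ Ici α)) ≤ rho α β :=
  ((hrho.le_iff hC hαβ hβ).1 le_rfl).2.1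

theorem rho_le_rho_of_mem (hrho : RhoFun C rho) (hC : SqSeq C) (hαβ : α < β)
    (hβ : β < omega2.{u}) (hξ : ξ ∈ C β ∩ Ico (Lam C α β) α) : rho ξ α ≤ rho α β :=
  ((hrho.le_iff hC hαβ hβ).1 le_rfl).2.2 ξ hξ

theorem rho_eq_otp_of_isLimPt (hrho : RhoFun C rho) (hC : SqSeq C) (hαβ : α < β)
    (hβ : β < omega2.{u}) (hα : IsLimPt (C β) α) : rho α β = otp (C β ∩ Iio α) := by
  have hmem : α ∈ C β ∩ Ici α := ⟨hC.mem_of_isLimPt hβ hαβ hα, self_mem_Ici⟩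
  have hsInf : sInf (C β ∩ Ici α) = α :=
    le_antisymm (csInf_le' hmem) (le_csInf ⟨α, hmem⟩ fun _ h => h.2)
  have hlam : α ≤ Lam C α β := le_lam (hα.inter_Iic le_rfl)
  refine le_antisymm ((hrho.le_iff hC hαβ hβ).2 ⟨le_rfl, ?_, fun ξ hξ => ?_⟩)
    (hrho.otp_le_rho hC hαβ hβ)
  · rw [hsInf, hrho.refl]
    exact zero_le
  · exact absurd (hlam.trans hξ.2.1) (not_le.2 hξ.2.2)

theorem rho_eq_of_isLimPt (hrho : RhoFun C rho) (hC : SqSeq C) {l : Ordinal.{u}}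
    (hγ : γ < omega2.{u}) (hlγ : l < γ) (hαl : α < l) (hl : IsLimPt (C γ) l) :
    rho α γ = rho α l := by
  have hCl := hC.coh l γ hγ hl
  have hres : ∀ X ⊆ Iio l, C l ∩ X = C γ ∩ X := fun X hX => by
    rw [hCl, inter_assoc, inter_eq_right.2 hX]
  have hlam : Lam C α l = Lam C α γ := by
    rw [Lam, Lam, hres _ (Iic_subset_Iio.2 hαl)]
  have hsInf : sInf (C l ∩ Ici α) = sInf (C γ ∩ Ici α) := by
    obtain ⟨c, hc, hαc, hcl⟩ := (isLimPt_iff.1 hl).2 α hαl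
    have hmin := csInf_mem (⟨c, hc, hαc.le⟩ : (C γ ∩ Ici α).Nonempty)
    have hmem : sInf (C γ ∩ Ici α) ∈ C l ∩ Ici α := by
      rw [hCl]
      exact ⟨⟨hmin.1, (csInf_le' (show c ∈ C γ ∩ Ici α from ⟨hc, hαc.le⟩)).trans_lt hcl⟩,
        hmin.2⟩
    refine le_antisymm (csInf_le' hmem) (le_csInf ⟨_, hmem⟩ fun x hx => csInf_le' ?_)
    rw [hCl] at hx
    exact ⟨hx.1.1, hx.2⟩
  rw [hrho.eq α γ (hαl.trans hlγ) hγ, hrho.eq α l hαl (hlγ.trans hγ), hsInf, hlam,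
    hres _ (Iio_subset_Iio hαl.le), hres _ fun x hx => hx.2.trans hαl]

theorem triangleAt_of_lam_le (hrho : RhoFun C rho) (hC : SqSeq C)
    (IH : ∀ γ' < γ, ∀ {α' β'}, α' ≤ β' → β' ≤ γ' → TriangleAt rho α' β' γ')
    (hγ : γ < omega2.{u}) (hαβ : α < β) (hβγ : β < γ) (hlam : Lam C β γ ≤ α) :
    TriangleAt rho α β γ := by
  have hαγ := hαβ.trans hβγ
  obtain ⟨hδ, hαδ⟩ := hC.sInf_inter_Ici_mem hαγ hγ
  set δ := sInf (C γ ∩ Ici α)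
  -- `δ` is either a term `ρ(δ,β)` or the first step `ρ(β,δ)` of the recursion for `ρ(β,γ)`.
  have hδ_edges : rho α δ ≤ max (rho α β) (rho β γ) ∧ rho α β ≤ max (rho α δ) (rho β γ) := by
    rcases lt_or_ge δ β with hδβ | hβδ
    · have hM : rho δ β ≤ rho β γ :=
        hrho.rho_le_rho_of_mem hC hβγ hγ ⟨hδ, hlam.trans hαδ, hδβ⟩
      have h := IH β hβγ hαδ hδβ.le
      exact ⟨h.2.trans (max_le_max_left _ hM), h.1.trans (max_le_max_left _ hM)⟩
    · have hδ_eq : sInf (C γ ∩ Ici β) = δ :=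
        le_antisymm (csInf_le' ⟨hδ, hβδ⟩) (csInf_le_csInf (OrderBot.bddBelow _)
          (hC.inter_Ici_nonempty hβγ hγ) (inter_subset_inter_right _ (Ici_subset_Ici.2 hαβ.le)))
      have hM : rho β δ ≤ rho β γ := hδ_eq ▸ hrho.rho_sInf_le_rho hC hβγ hγ
      have h := IH δ (hC.sInf_inter_Ici_lt hαγ hγ) hαβ.le hβδ
      exact ⟨h.1.trans (max_le_max_left _ hM), h.2.trans (max_le_max_left _ hM)⟩
  refine ⟨(hrho.le_iff hC hαγ hγ).2 ⟨?_, hδ_edges.1, fun ξ hξ => ?_⟩,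
    hδ_edges.2.trans (max_le_max_right _ (hrho.rho_sInf_le_rho hC hαγ hγ))⟩
  · refine le_max_of_le_right ((otp_mono ?_ ?_).trans (hrho.otp_le_rho hC hβγ hγ))
    · exact inter_subset_inter_right _ (Iio_subset_Iio hαβ.le)
    · exact bddAbove_Iio.mono inter_subset_right
  · have hM : rho ξ β ≤ rho β γ := hrho.rho_le_rho_of_mem hC hβγ hγ
      ⟨hξ.1, (lam_le_lam_of_lam_le hlam).trans hξ.2.1, hξ.2.2.trans hαβ⟩
    exact (IH β hβγ hξ.2.2.le hαβ.le).2.trans (max_le (le_max_of_le_right hM) (le_max_left _ _))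

theorem triangleAt_of_lt_lam (hrho : RhoFun C rho) (hC : SqSeq C)
    (IH : ∀ γ' < γ, ∀ {α' β'}, α' ≤ β' → β' ≤ γ' → TriangleAt rho α' β' γ')
    (hγ : γ < omega2.{u}) (hβγ : β < γ) (hlam : α < Lam C β γ) : TriangleAt rho α β γ := by
  set l := Lam C β γ
  have hl : IsLimPt (C γ) l := isLimPt_lam (zero_le.trans_lt hlam).ne'
  have hlβ : l ≤ β := lam_le
  have hM : rho l β ≤ rho β γ := by
    rcases hlβ.eq_or_lt with heq | hlt
    · rw [heq, hrho.refl]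
      exact zero_le
    · exact hrho.rho_le_rho_of_mem hC hβγ hγ
        ⟨hC.mem_of_isLimPt hγ (hlβ.trans_lt hβγ) hl, le_rfl, hlt⟩
  have h := IH β hβγ hlam.le hlβ
  rw [TriangleAt, hrho.rho_eq_of_isLimPt hC hγ (hlβ.trans_lt hβγ) hlam hl]
  exact ⟨h.2.trans (max_le_max_left _ hM), h.1.trans (max_le_max_left _ hM)⟩

theorem triangleAt (hrho : RhoFun C rho) (hC : SqSeq C) (hγ : γ < omega2.{u}) (hαβ : α ≤ β)
    (hβγ : β ≤ γ) : TriangleAt rho α β γ := by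
  induction γ using WellFoundedLT.induction generalizing α β with
  | ind γ IH =>
  have IH' : ∀ γ' < γ, ∀ {α' β'}, α' ≤ β' → β' ≤ γ' → TriangleAt rho α' β' γ' :=
    fun γ' hγ' _ _ => IH γ' hγ' (hγ'.trans hγ)
  rcases hαβ.eq_or_lt with rfl | hαβ
  · rw [TriangleAt, hrho.refl]
    exact ⟨le_max_right _ _, zero_le⟩
  rcases hβγ.eq_or_lt with rfl | hβγ
  · rw [TriangleAt, hrho.refl]
    exact ⟨le_max_left _ _, le_max_left _ _⟩
  rcases le_or_gt (Lam C β γ) α with hlam | hlam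
  · exact hrho.triangleAt_of_lam_le hC IH' hγ hαβ hβγ hlam
  · exact hrho.triangleAt_of_lt_lam hC IH' hγ hβγ hlam

theorem otp_le_of_cofinal (hrho : RhoFun C rho) (hC : SqSeq C) (hαβ : α < β)
    (hβ : β < omega2.{u}) (hcof : ∀ η < α, ∃ ξ, η < ξ ∧ ξ < α ∧ rho ξ β ≤ ν) :
    otp (C β ∩ Iio α) ≤ ν :=
  otp_inter_Iio_le_of_cofinal fun η hη =>
    let ⟨ξ, hηξ, hξα, hξν⟩ := hcof η hη
    ⟨ξ, hηξ, hξα, (hrho.otp_le_rho hC (hξα.trans hαβ) hβ).trans hξν⟩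

theorem rho_sInf_le_rho_of_gap (hrho : RhoFun C rho) (hC : SqSeq C) {η₀ : Ordinal.{u}}
    (hαβ : α < β) (hβ : β < omega2.{u}) (hgap : C β ∩ Ioo η₀ α = ∅) (hη₀ξ : η₀ < ξ) (hξα : ξ < α) :
    rho ξ (sInf (C β ∩ Ici α)) ≤ rho ξ β := by
  rw [← inter_Ici_eq_of_inter_Ioo_eq_empty hgap hη₀ξ hξα.le]
  exact hrho.rho_sInf_le_rho hC (hξα.trans hαβ) hβ

theorem rho_le_of_cofinal_of_gap (hrho : RhoFun C rho) (hC : SqSeq C) {η₀ : Ordinal.{u}}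
    (hαβ : α < β) (hβ : β < omega2.{u}) (hη₀ : η₀ < α) (hgap : C β ∩ Ioo η₀ α = ∅)
    (hcof : ∀ η < α, ∃ ξ, η < ξ ∧ ξ < α ∧ rho ξ β ≤ ν)
    (hβ₁ : rho α (sInf (C β ∩ Ici α)) ≤ ν) : rho α β ≤ ν := by
  obtain ⟨-, hαβ₁⟩ := hC.sInf_inter_Ici_mem hαβ hβ
  have hβ₁ω := (hC.sInf_inter_Ici_lt hαβ hβ).trans hβ
  refine (hrho.le_iff hC hαβ hβ).2 ⟨hrho.otp_le_of_cofinal hC hαβ hβ hcof, hβ₁, fun ζ hζ => ?_⟩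
  obtain ⟨ξ, hξ, hξα, hξν⟩ := hcof (max ζ η₀) (max_lt hζ.2.2 hη₀)
  have hζξ : rho ζ ξ ≤ ν := (hrho.rho_le_rho_of_mem hC (hξα.trans hαβ) hβ
    ⟨hζ.1, (lam_mono hξα.le).trans hζ.2.1, (le_max_left _ _).trans_lt hξ⟩).trans hξν
  have hξβ₁ : rho ξ (sInf (C β ∩ Ici α)) ≤ ν :=
    (hrho.rho_sInf_le_rho_of_gap hC hαβ hβ hgap ((le_max_right _ _).trans_lt hξ) hξα).trans hξν
  have hζβ₁ := (hrho.triangleAt hC hβ₁ω ((le_max_left _ _).trans hξ.le) (hξα.le.trans hαβ₁)).1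
  exact (hrho.triangleAt hC hβ₁ω hζ.2.2.le hαβ₁).2.trans
    (max_le (hζβ₁.trans (max_le hζξ hξβ₁)) hβ₁)

end RhoFun

theorem rho_le_of_cofinal_general (C : Ordinal.{u} → Set Ordinal.{u}) (hC : SqSeq C)
    (rho : Ordinal.{u} → Ordinal.{u} → Ordinal.{u}) (hrho : RhoFun C rho)
    (α β ν : Ordinal.{u}) (hαβ : α < β) (hβ : β < omega2.{u})
    (hα : Order.IsSuccLimit α)
    (hcof : ∀ η < α, ∃ ξ, η ≤ ξ ∧ ξ < α ∧ rho ξ β ≤ ν) :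
    rho α β ≤ ν := by
  induction β using WellFoundedLT.induction generalizing α with
  | ind β IH =>
  have hcof_lt : ∀ η < α, ∃ ξ, η < ξ ∧ ξ < α ∧ rho ξ β ≤ ν := fun η hη => by
    obtain ⟨ξ, hηξ, hξα, hξν⟩ := hcof (Order.succ η) (hα.succ_lt hη)
    exact ⟨ξ, Order.succ_le_iff.1 hηξ, hξα, hξν⟩
  by_cases hlim : IsLimPt (C β) α
  · rw [hrho.rho_eq_otp_of_isLimPt hC hαβ hβ hlim]
    exact hrho.otp_le_of_cofinal hC hαβ hβ hcof_lt
  obtain ⟨η₀, hη₀, hgap⟩ : ∃ η₀ < α, C β ∩ Ioo η₀ α = ∅ := by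
    simpa [isLimPt_iff, hα.pos, not_nonempty_iff_eq_empty] using hlim
  refine hrho.rho_le_of_cofinal_of_gap hC hαβ hβ hη₀ hgap hcof_lt ?_
  obtain ⟨-, hαβ₁ : α ≤ sInf (C β ∩ Ici α)⟩ := hC.sInf_inter_Ici_mem hαβ hβ
  rcases hαβ₁.eq_or_lt with heq | hαβ₁
  · rw [← heq, hrho.refl]
    exact zero_le
  have hβ₁β := hC.sInf_inter_Ici_lt hαβ hβ
  refine IH _ hβ₁β α hαβ₁ (hβ₁β.trans hβ) hα fun η hη => ?_
  obtain ⟨ξ, hηξ, hξα, hξν⟩ := hcof_lt (max η η₀) (max_lt hη hη₀)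
  exact ⟨ξ, (le_max_left _ _).trans hηξ.le, hξα,
    (hrho.rho_sInf_le_rho_of_gap hC hαβ hβ hgap ((le_max_right _ _).trans_lt hηξ) hξα).trans hξν⟩

/-- If `α < β < ω₂`, `α` is a limit ordinal, `ν < ω₁`, and the set
`{ξ < α : ρ(ξ,β) ≤ ν}` is cofinal in `α`, then `ρ(α,β) ≤ ν`. -/
theorem rho_le_of_cofinal (C : Ordinal.{u} → Set Ordinal.{u}) (hC : SqSeq C)
    (rho : Ordinal.{u} → Ordinal.{u} → Ordinal.{u}) (hrho : RhoFun C rho)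
    (α β ν : Ordinal.{u}) (hαβ : α < β) (hβ : β < omega2.{u})
    (hα : Order.IsSuccLimit α) (hν : ν < omega1.{u})
    (hcof : ∀ η < α, ∃ ξ, η ≤ ξ ∧ ξ < α ∧ rho ξ β ≤ ν) :
    rho α β ≤ ν :=
  rho_le_of_cofinal_general C hC rho hrho α β ν hαβ hβ hα hcof

end
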